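/- arXiv:2310.12739 — 5 statements merged into one kernel-verified Lean document; each statement's English description precedes it below -/
import Mathlib

section
/- Let F₁₀, F₂₀, F₁N, F₂N and α₁, α₂, β₁, β₂, τ₁₁, τ₁₂, τ₂₁, τ₂₂ be real numbers, and define BT = F₁₀F₂₀ − F₁NF₂N − τ₁₁F₂₀(α₁F₁₀ + α₂F₂₀) − τ₁₂F₂N(β₁F₁N − β₂F₂N) − τ₂₁F₁₀(α₁F₁₀ + α₂F₂₀) − τ₂₂F₁N(β₁F₁N − β₂F₂N). Then: (i) if α₁ = 0, α₂ > 0, β₁ = 0, β₂ > 0 and τ₁₁ ≥ 0, τ₂₁ = 1/α₂, τ₁₂ ≤ 0, τ₂₂ = 1/β₂, then BT ≤ 0; (ii) if α₁ > 0, α₂ ≥ 0, β₁ > 0, β₂ ≥ 0 and τ₁₁ = 1/α₁, τ₂₁ = 0, τ₁₂ = −1/β₁, τ₂₂ = 0, then BT ≤ 0. -/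
/-!
The boundary term splits into a contribution of each endpoint, and the right one is the left one
with the velocity flux and the penalty `τ₁₂` negated. At an endpoint the two penalties cancel the
cross term `F₁F₂`, leaving a nonpositive multiple of `F₂²`.
-/

def boundaryPenaltyTerm (F₁ F₂ α₁ α₂ τ₁ τ₂ : ℝ) : ℝ :=
  F₁ * F₂ - τ₁ * F₂ * (α₁ * F₁ + α₂ * F₂) - τ₂ * F₁ * (α₁ * F₁ + α₂ * F₂)

lemma boundaryPenaltyTerm_nonpos_of_coeff_eq_zero {F₁ F₂ α₂ τ₁ : ℝ} (hα₂ : 0 < α₂)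
    (hτ₁ : 0 ≤ τ₁) : boundaryPenaltyTerm F₁ F₂ 0 α₂ τ₁ (1 / α₂) ≤ 0 := by
  have h : boundaryPenaltyTerm F₁ F₂ 0 α₂ τ₁ (1 / α₂) = -(τ₁ * α₂ * F₂ ^ 2) := by
    unfold boundaryPenaltyTerm
    field_simp
    ring
  rw [h, neg_nonpos]
  positivity

lemma boundaryPenaltyTerm_nonpos_of_coeff_pos {F₁ F₂ α₁ α₂ : ℝ} (hα₁ : 0 < α₁)
    (hα₂ : 0 ≤ α₂) : boundaryPenaltyTerm F₁ F₂ α₁ α₂ (1 / α₁) 0 ≤ 0 := by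
  have h : boundaryPenaltyTerm F₁ F₂ α₁ α₂ (1 / α₁) 0 = -(α₂ / α₁ * F₂ ^ 2) := by
    unfold boundaryPenaltyTerm
    field_simp
    ring
  rw [h, neg_nonpos]
  positivity

/-- The stable-penalty lemma: with the boundary term
`BT = F₁₀F₂₀ − F₁NF₂N − τ₁₁F₂₀(α₁F₁₀ + α₂F₂₀) − τ₁₂F₂N(β₁F₁N − β₂F₂N)
      − τ₂₁F₁₀(α₁F₁₀ + α₂F₂₀) − τ₂₂F₁N(β₁F₁N − β₂F₂N)`,
either choice of penalty parameters makes `BT ≤ 0`. -/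
theorem stmt10 (F₁₀ F₂₀ F₁N F₂N α₁ α₂ β₁ β₂ τ₁₁ τ₁₂ τ₂₁ τ₂₂ BT : ℝ)
    (hBT : BT = F₁₀*F₂₀ - F₁N*F₂N
      - τ₁₁*F₂₀*(α₁*F₁₀ + α₂*F₂₀) - τ₁₂*F₂N*(β₁*F₁N - β₂*F₂N)
      - τ₂₁*F₁₀*(α₁*F₁₀ + α₂*F₂₀) - τ₂₂*F₁N*(β₁*F₁N - β₂*F₂N)) :
    ((α₁ = 0 ∧ 0 < α₂ ∧ β₁ = 0 ∧ 0 < β₂ ∧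
        0 ≤ τ₁₁ ∧ τ₂₁ = 1/α₂ ∧ τ₁₂ ≤ 0 ∧ τ₂₂ = 1/β₂) → BT ≤ 0) ∧
    ((0 < α₁ ∧ 0 ≤ α₂ ∧ 0 < β₁ ∧ 0 ≤ β₂ ∧
        τ₁₁ = 1/α₁ ∧ τ₂₁ = 0 ∧ τ₁₂ = -1/β₁ ∧ τ₂₂ = 0) → BT ≤ 0) := by
  have hsplit : BT = boundaryPenaltyTerm F₁₀ F₂₀ α₁ α₂ τ₁₁ τ₂₁
      + boundaryPenaltyTerm F₁N (-F₂N) β₁ β₂ (-τ₁₂) τ₂₂ := by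
    rw [hBT]
    unfold boundaryPenaltyTerm
    ring
  rw [hsplit]
  constructor
  · rintro ⟨rfl, hα₂, rfl, hβ₂, hτ₁₁, rfl, hτ₁₂, rfl⟩
    exact add_nonpos (boundaryPenaltyTerm_nonpos_of_coeff_eq_zero hα₂ hτ₁₁)
      (boundaryPenaltyTerm_nonpos_of_coeff_eq_zero hβ₂ (neg_nonneg.mpr hτ₁₂))
  · rintro ⟨hα₁, hα₂, hβ₁, hβ₂, rfl, rfl, rfl, rfl⟩
    have hτ₁₂ : -(-1 / β₁) = 1 / β₁ := by ring
    rw [hτ₁₂]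
    exact add_nonpos (boundaryPenaltyTerm_nonpos_of_coeff_pos hα₁ hα₂)
      (boundaryPenaltyTerm_nonpos_of_coeff_pos hβ₁ hβ₂)
end

section
/- Let n ≥ 1, let p : Fin (n+1) → ℝ satisfy pⱼ > 0 for all j, and let D₊, D₋ be (n+1)×(n+1) real matrices satisfying the dual-pairing SBP property: for all f, g ∈ ℝ^{n+1}, Σⱼ gⱼ pⱼ (D₊f)ⱼ + Σⱼ fⱼ pⱼ (D₋g)ⱼ = fₙgₙ − f₀g₀. Let g, U, H ∈ ℝ with g > 0, H > 0, U² < gH, and let α₁, α₂, β₁, β₂, τ₁₁, τ₁₂, τ₂₁, τ₂₂ be constants satisfying either case (i) or case (ii) of the stable-penalty lemma. Let h, u : ℝ → ℝ^{n+1} be differentiable and satisfy for all t: h'(t) = −D₊F₁(t) + S₁(t) and u'(t) = −D₋F₂(t) + S₂(t), where F₁ = U·h + H·u, F₂ = g·h + U·u, S₁(t)ⱼ = −τ₁₁ p₀⁻¹ (α₁F₁(t)₀ + α₂F₂(t)₀) if j = 0, −τ₁₂ pₙ⁻¹ (β₁F₁(t)ₙ − β₂F₂(t)ₙ) if j = n,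 and 0 otherwise, and S₂ is the same with τ₂₁, τ₂₂ in place of τ₁₁, τ₁₂. Then the discrete energy E(t) = Σⱼ pⱼ (g h(t)ⱼ² + 2U h(t)ⱼ u(t)ⱼ + H u(t)ⱼ²) is nonincreasing: E(t) ≤ E(s) for all 0 ≤ s ≤ t. -/
open Matrix Finset

/-!
Differentiating `E = Σⱼ pⱼ (g hⱼ² + 2U hⱼuⱼ + H uⱼ²)` gives `E' = 2 (F₂ᵀ P h' + F₁ᵀ P u')`.
The dual-pairing SBP identity collapses the contributions of `D₊` and `D₋` to the boundary
values `F₁₀F₂₀ − F₁ₙF₂ₙ`, and the diagonal norm cancels the factors `p₀⁻¹`, `pₙ⁻¹` of the SAT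
terms, so `E'` is twice a quadratic form in the four boundary fluxes. The penalty parameters
of either case are chosen so that the cross terms of this form cancel, leaving a
nonpositive combination of squares.
-/

theorem hasDerivAt_sum_weighted_quadratic {ι : Type*} [Fintype ι] (p : ι → ℝ) (g U H : ℝ)
    {h u : ℝ → ι → ℝ} {h' u' : ι → ℝ} {t : ℝ}
    (hh : HasDerivAt h h' t) (hu : HasDerivAt u u' t) :
    HasDerivAt (fun τ => ∑ j, p j * (g * (h τ j)^2 + 2*U*(h τ j)*(u τ j) + H*(u τ j)^2))
      (2 * ∑ j, p j * (h' j * (g * h t j + U * u t j) + u' j * (U * h t j + H * u t j))) t := by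
  rw [Finset.mul_sum]
  refine HasDerivAt.fun_sum fun j _ => ?_
  have hj := hasDerivAt_pi.mp hh j
  have uj := hasDerivAt_pi.mp hu j
  refine (((((hj.pow 2).const_mul g).add ((hj.const_mul (2*U)).mul uj)).add
    ((uj.pow 2).const_mul H)).const_mul (p j)).congr_deriv ?_
  push_cast
  ring

theorem sum_mul_weight_mul_sat {n : ℕ} (hn : 1 ≤ n) {p : Fin (n+1) → ℝ}
    (hp₀ : p 0 ≠ 0) (hpₙ : p (Fin.last n) ≠ 0) (f S : Fin (n+1) → ℝ) (c₀ cₙ A B : ℝ)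
    (hS : ∀ j, S j =
      if j = 0 then c₀ * (p 0)⁻¹ * A
      else if j = Fin.last n then cₙ * (p (Fin.last n))⁻¹ * B
      else 0) :
    ∑ j, f j * p j * S j = c₀ * f 0 * A + cₙ * f (Fin.last n) * B := by
  have hlast : Fin.last n ≠ 0 := Fin.ext_iff.not.mpr (by rw [Fin.val_last, Fin.val_zero]; omega)
  rw [Fintype.sum_eq_add 0 (Fin.last n) hlast.symm fun j hj => by simp [hS, hj.1, hj.2],
    hS 0, hS (Fin.last n), if_pos rfl, if_neg hlast, if_pos rfl]
  field_simp

theorem sum_weighted_rate_eq_boundary {n : ℕ} (p : Fin (n+1) → ℝ)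
    (Dp Dm : Matrix (Fin (n+1)) (Fin (n+1)) ℝ)
    (hSBP : ∀ f g : Fin (n+1) → ℝ,
      (∑ j, g j * p j * (Dp *ᵥ f) j) + (∑ j, f j * p j * (Dm *ᵥ g) j)
        = f (Fin.last n) * g (Fin.last n) - f 0 * g 0)
    (F₁ F₂ S₁ S₂ : Fin (n+1) → ℝ) :
    ∑ j, p j * ((-(Dp *ᵥ F₁) + S₁) j * F₂ j + (-(Dm *ᵥ F₂) + S₂) j * F₁ j)
      = F₁ 0 * F₂ 0 - F₁ (Fin.last n) * F₂ (Fin.last n)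
        + ∑ j, F₂ j * p j * S₁ j + ∑ j, F₁ j * p j * S₂ j := by
  have hsplit : ∀ j, p j * ((-(Dp *ᵥ F₁) + S₁) j * F₂ j + (-(Dm *ᵥ F₂) + S₂) j * F₁ j)
      = -(F₂ j * p j * (Dp *ᵥ F₁) j) - F₁ j * p j * (Dm *ᵥ F₂) j
        + F₂ j * p j * S₁ j + F₁ j * p j * S₂ j := fun j => by
    simp only [Pi.add_apply, Pi.neg_apply]
    ring
  simp only [hsplit, sum_add_distrib, sum_sub_distrib, sum_neg_distrib]
  linarith [hSBP F₁ F₂]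

/-- The boundary term `BT` of the discrete energy rate, in the fluxes `a = F₁₀`, `b = F₂₀`,
`c = F₁ₙ`, `d = F₂ₙ`. -/
theorem boundary_term_nonpos {α₁ α₂ β₁ β₂ τ₁₁ τ₁₂ τ₂₁ τ₂₂ : ℝ}
    (hpen :
      (α₁ = 0 ∧ 0 < α₂ ∧ β₁ = 0 ∧ 0 < β₂ ∧
        0 ≤ τ₁₁ ∧ τ₂₁ = 1/α₂ ∧ τ₁₂ ≤ 0 ∧ τ₂₂ = 1/β₂) ∨
      (0 < α₁ ∧ 0 ≤ α₂ ∧ 0 < β₁ ∧ 0 ≤ β₂ ∧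
        τ₁₁ = 1/α₁ ∧ τ₂₁ = 0 ∧ τ₁₂ = -1/β₁ ∧ τ₂₂ = 0))
    (a b c d : ℝ) :
    a * b - c * d
      + (-τ₁₁ * b * (α₁ * a + α₂ * b) + -τ₁₂ * d * (β₁ * c - β₂ * d))
      + (-τ₂₁ * a * (α₁ * a + α₂ * b) + -τ₂₂ * c * (β₁ * c - β₂ * d)) ≤ 0 := by
  rcases hpen with ⟨rfl, hα₂, rfl, hβ₂, hτ₁₁, rfl, hτ₁₂, rfl⟩ |
    ⟨hα₁, hα₂, hβ₁, hβ₂, rfl, rfl, rfl, rfl⟩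
  · have hform : a * b - c * d
        + (-τ₁₁ * b * (0 * a + α₂ * b) + -τ₁₂ * d * (0 * c - β₂ * d))
        + (-(1/α₂) * a * (0 * a + α₂ * b) + -(1/β₂) * c * (0 * c - β₂ * d))
        = -(τ₁₁ * α₂ * b^2) + τ₁₂ * β₂ * d^2 := by
      field_simp
      ring
    rw [hform]
    nlinarith [mul_nonneg (mul_nonneg hτ₁₁ hα₂.le) (sq_nonneg b),
      mul_nonneg (mul_nonneg (neg_nonneg.mpr hτ₁₂) hβ₂.le) (sq_nonneg d)]
  · have hform : a * b - c * d
        + (-(1/α₁) * b * (α₁ * a + α₂ * b) + -(-1/β₁) * d * (β₁ * c - β₂ * d))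
        + (-0 * a * (α₁ * a + α₂ * b) + -0 * c * (β₁ * c - β₂ * d))
        = -(α₂ / α₁ * b^2) - β₂ / β₁ * d^2 := by
      field_simp
      ring
    rw [hform]
    nlinarith [mul_nonneg (div_nonneg hα₂ hα₁.le) (sq_nonneg b),
      mul_nonneg (div_nonneg hβ₂ hβ₁.le) (sq_nonneg d)]

theorem stmt12_general (n : ℕ) (hn : 1 ≤ n)
    (p : Fin (n+1) → ℝ) (hp : ∀ j, 0 < p j)
    (Dp Dm : Matrix (Fin (n+1)) (Fin (n+1)) ℝ)
    (hSBP : ∀ f g : Fin (n+1) → ℝ,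
      (∑ j, g j * p j * (Dp *ᵥ f) j) + (∑ j, f j * p j * (Dm *ᵥ g) j)
        = f (Fin.last n) * g (Fin.last n) - f 0 * g 0)
    (g U H : ℝ)
    (α₁ α₂ β₁ β₂ τ₁₁ τ₁₂ τ₂₁ τ₂₂ : ℝ)
    (hpen :
      (α₁ = 0 ∧ 0 < α₂ ∧ β₁ = 0 ∧ 0 < β₂ ∧
        0 ≤ τ₁₁ ∧ τ₂₁ = 1/α₂ ∧ τ₁₂ ≤ 0 ∧ τ₂₂ = 1/β₂) ∨
      (0 < α₁ ∧ 0 ≤ α₂ ∧ 0 < β₁ ∧ 0 ≤ β₂ ∧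
        τ₁₁ = 1/α₁ ∧ τ₂₁ = 0 ∧ τ₁₂ = -1/β₁ ∧ τ₂₂ = 0))
    (h u F₁ F₂ S₁ S₂ : ℝ → Fin (n+1) → ℝ)
    (hF₁ : ∀ t j, F₁ t j = U * h t j + H * u t j)
    (hF₂ : ∀ t j, F₂ t j = g * h t j + U * u t j)
    (hS₁ : ∀ t j, S₁ t j =
      if j = 0 then -τ₁₁ * (p 0)⁻¹ * (α₁ * F₁ t 0 + α₂ * F₂ t 0)
      else if j = Fin.last n then
        -τ₁₂ * (p (Fin.last n))⁻¹ * (β₁ * F₁ t (Fin.last n) - β₂ * F₂ t (Fin.last n))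
      else 0)
    (hS₂ : ∀ t j, S₂ t j =
      if j = 0 then -τ₂₁ * (p 0)⁻¹ * (α₁ * F₁ t 0 + α₂ * F₂ t 0)
      else if j = Fin.last n then
        -τ₂₂ * (p (Fin.last n))⁻¹ * (β₁ * F₁ t (Fin.last n) - β₂ * F₂ t (Fin.last n))
      else 0)
    (hh : ∀ t, HasDerivAt h (-(Dp *ᵥ F₁ t) + S₁ t) t)
    (hu : ∀ t, HasDerivAt u (-(Dm *ᵥ F₂ t) + S₂ t) t) :
    ∀ s t : ℝ, 0 ≤ s → s ≤ t →
      (∑ j, p j * (g * (h t j)^2 + 2*U*(h t j)*(u t j) + H*(u t j)^2))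
        ≤ ∑ j, p j * (g * (h s j)^2 + 2*U*(h s j)*(u s j) + H*(u s j)^2) := by
  intro s t _ hst
  refine antitone_of_hasDerivAt_nonpos
    (fun τ => hasDerivAt_sum_weighted_quadratic p g U H (hh τ) (hu τ)) (fun τ => ?_) hst
  simp only [← hF₁ τ, ← hF₂ τ, Pi.zero_apply]
  rw [sum_weighted_rate_eq_boundary p Dp Dm hSBP,
    sum_mul_weight_mul_sat hn (hp 0).ne' (hp _).ne' _ _ _ _ _ _ (hS₁ τ),
    sum_mul_weight_mul_sat hn (hp 0).ne' (hp _).ne' _ _ _ _ _ _ (hS₂ τ)]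
  linarith [boundary_term_nonpos hpen (F₁ τ 0) (F₂ τ 0) (F₁ τ (Fin.last n)) (F₂ τ (Fin.last n))]

/-- Strong stability of the dual-pairing SBP-SAT semi-discrete approximation of the
linear vector-invariant shallow water equations: under the dual-pairing SBP property,
subcritical mean flow, and stable penalty parameters, the discrete weighted energy
`E(t) = Σⱼ pⱼ (g hⱼ² + 2U hⱼuⱼ + H uⱼ²)` is nonincreasing. -/
theorem stmt12 (n : ℕ) (hn : 1 ≤ n)
    (p : Fin (n+1) → ℝ) (hp : ∀ j, 0 < p j)
    (Dp Dm : Matrix (Fin (n+1)) (Fin (n+1)) ℝ)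
    (hSBP : ∀ f g : Fin (n+1) → ℝ,
      (∑ j, g j * p j * (Dp *ᵥ f) j) + (∑ j, f j * p j * (Dm *ᵥ g) j)
        = f (Fin.last n) * g (Fin.last n) - f 0 * g 0)
    (g U H : ℝ) (hg : 0 < g) (hH : 0 < H) (hsub : U^2 < g*H)
    (α₁ α₂ β₁ β₂ τ₁₁ τ₁₂ τ₂₁ τ₂₂ : ℝ)
    (hpen :
      (α₁ = 0 ∧ 0 < α₂ ∧ β₁ = 0 ∧ 0 < β₂ ∧
        0 ≤ τ₁₁ ∧ τ₂₁ = 1/α₂ ∧ τ₁₂ ≤ 0 ∧ τ₂₂ = 1/β₂) ∨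
      (0 < α₁ ∧ 0 ≤ α₂ ∧ 0 < β₁ ∧ 0 ≤ β₂ ∧
        τ₁₁ = 1/α₁ ∧ τ₂₁ = 0 ∧ τ₁₂ = -1/β₁ ∧ τ₂₂ = 0))
    (h u F₁ F₂ S₁ S₂ : ℝ → Fin (n+1) → ℝ)
    (hF₁ : ∀ t j, F₁ t j = U * h t j + H * u t j)
    (hF₂ : ∀ t j, F₂ t j = g * h t j + U * u t j)
    (hS₁ : ∀ t j, S₁ t j =
      if j = 0 then -τ₁₁ * (p 0)⁻¹ * (α₁ * F₁ t 0 + α₂ * F₂ t 0)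
      else if j = Fin.last n then
        -τ₁₂ * (p (Fin.last n))⁻¹ * (β₁ * F₁ t (Fin.last n) - β₂ * F₂ t (Fin.last n))
      else 0)
    (hS₂ : ∀ t j, S₂ t j =
      if j = 0 then -τ₂₁ * (p 0)⁻¹ * (α₁ * F₁ t 0 + α₂ * F₂ t 0)
      else if j = Fin.last n then
        -τ₂₂ * (p (Fin.last n))⁻¹ * (β₁ * F₁ t (Fin.last n) - β₂ * F₂ t (Fin.last n))
      else 0)
    (hh : ∀ t, HasDerivAt h (-(Dp *ᵥ F₁ t) + S₁ t) t)
    (hu : ∀ t, HasDerivAt u (-(Dm *ᵥ F₂ t) + S₂ t) t) :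
    ∀ s t : ℝ, 0 ≤ s → s ≤ t →
      (∑ j, p j * (g * (h t j)^2 + 2*U*(h t j)*(u t j) + H*(u t j)^2))
        ≤ ∑ j, p j * (g * (h s j)^2 + 2*U*(h s j)*(u s j) + H*(u s j)^2) :=
  stmt12_general n hn p hp Dp Dm hSBP g U H α₁ α₂ β₁ β₂ τ₁₁ τ₁₂ τ₂₁ τ₂₂ hpen h u F₁ F₂ S₁ S₂ hF₁ hF₂
    hS₁ hS₂ hh hu
end

section
/- Let n ≥ 1, let p : Fin (n+1) → ℝ satisfy pⱼ > 0 for all j, and let D₊, D₋ be (n+1)×(n+1) real matrices satisfying the dual-pairing SBP property: for all f, g ∈ ℝ^{n+1}, Σⱼ gⱼ pⱼ (D₊f)ⱼ + Σⱼ fⱼ pⱼ (D₋g)ⱼ = fₙgₙ − f₀g₀. Let g > 0 and let α₁, α₂, β₁, β₂, τ₁₁, τ₁₂, τ₂₁, τ₂₂ be constants satisfying either case (i) or case (ii) of the stable-penalty lemma. Let h, u : ℝ → ℝ^{n+1} be differentiable and satisfy for all t: h'(t) = −D₊F₁(t) + S₁(t) and u'(t) = −D₋F₂(t) + S₂(t),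 where F₁(t)ⱼ = u(t)ⱼ·h(t)ⱼ, F₂(t)ⱼ = u(t)ⱼ²/2 + g·h(t)ⱼ, S₁(t)ⱼ = −τ₁₁ p₀⁻¹ (α₁F₁(t)₀ + α₂F₂(t)₀) if j = 0, −τ₁₂ pₙ⁻¹ (β₁F₁(t)ₙ − β₂F₂(t)ₙ) if j = n, and 0 otherwise, and S₂ is the same with τ₂₁, τ₂₂ in place of τ₁₁, τ₁₂. Then the discrete energy E(t) = Σⱼ pⱼ (g h(t)ⱼ² + h(t)ⱼ u(t)ⱼ²) is nonincreasing: E(t) ≤ E(s) for all 0 ≤ s ≤ t. -/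
open Matrix Finset

/-!
Since `∂E/∂h = 2 P F₂` and `∂E/∂u = 2 P F₁`, the energy rate is `2 (F₂ᵀ P dh/dt + F₁ᵀ P du/dt)`.
The dual-pairing SBP property collapses the interior terms `-(F₂ᵀ P D₊ F₁ + F₁ᵀ P D₋ F₂)` to
the boundary values `F₁₀F₂₀ - F₁ₙF₂ₙ`, and the SAT terms add at each boundary a quadratic form
in the boundary fluxes which, for stable penalties, cancels the indefinite cross term and
leaves a nonpositive square.
-/

def StablePenalty (α₁ α₂ β₁ β₂ τ₁₁ τ₁₂ τ₂₁ τ₂₂ : ℝ) : Prop :=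
  (α₁ = 0 ∧ 0 < α₂ ∧ β₁ = 0 ∧ 0 < β₂ ∧
    0 ≤ τ₁₁ ∧ τ₂₁ = 1/α₂ ∧ τ₁₂ ≤ 0 ∧ τ₂₂ = 1/β₂) ∨
  (0 < α₁ ∧ 0 ≤ α₂ ∧ 0 < β₁ ∧ 0 ≤ β₂ ∧
    τ₁₁ = 1/α₁ ∧ τ₂₁ = 0 ∧ τ₁₂ = -1/β₁ ∧ τ₂₂ = 0)

/-- With `a, b` the fluxes `F₁, F₂` at the left boundary and `c, d` those at the right one,
this is the boundary term `BT` of the energy rate. -/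
theorem StablePenalty.boundaryTerm_nonpos {α₁ α₂ β₁ β₂ τ₁₁ τ₁₂ τ₂₁ τ₂₂ : ℝ}
    (hpen : StablePenalty α₁ α₂ β₁ β₂ τ₁₁ τ₁₂ τ₂₁ τ₂₂) (a b c d : ℝ) :
    a * b - c * d - (τ₁₁ * b + τ₂₁ * a) * (α₁ * a + α₂ * b)
      - (τ₁₂ * d + τ₂₂ * c) * (β₁ * c - β₂ * d) ≤ 0 := by
  rcases hpen with ⟨rfl, hα₂, rfl, hβ₂, hτ₁₁, rfl, hτ₁₂, rfl⟩ |
    ⟨hα₁, hα₂, hβ₁, hβ₂, rfl, rfl, rfl, rfl⟩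
  · have hBT : a * b - c * d - (τ₁₁ * b + 1/α₂ * a) * (0 * a + α₂ * b)
        - (τ₁₂ * d + 1/β₂ * c) * (0 * c - β₂ * d) = -(τ₁₁ * α₂ * b^2) + τ₁₂ * β₂ * d^2 := by
      field_simp
      ring
    rw [hBT]
    linarith [mul_nonneg (mul_nonneg hτ₁₁ hα₂.le) (sq_nonneg b),
      mul_nonpos_of_nonpos_of_nonneg (mul_nonpos_of_nonpos_of_nonneg hτ₁₂ hβ₂.le) (sq_nonneg d)]
  · have hBT : a * b - c * d - (1/α₁ * b + 0 * a) * (α₁ * a + α₂ * b)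
        - (-1/β₁ * d + 0 * c) * (β₁ * c - β₂ * d) = -(α₂ / α₁ * b^2) - β₂ / β₁ * d^2 := by
      field_simp
      ring
    rw [hBT]
    linarith [mul_nonneg (div_nonneg hα₂ hα₁.le) (sq_nonneg b),
      mul_nonneg (div_nonneg hβ₂ hβ₁.le) (sq_nonneg d)]

theorem sum_mul_mul_boundary_ite {n : ℕ} (hn : 1 ≤ n) {p : Fin (n+1) → ℝ}
    (hp₀ : p 0 ≠ 0) (hpₙ : p (Fin.last n) ≠ 0) (w : Fin (n+1) → ℝ) {v : Fin (n+1) → ℝ}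
    {a b x y : ℝ} (hv : ∀ j, v j = if j = 0 then a * (p 0)⁻¹ * x
      else if j = Fin.last n then b * (p (Fin.last n))⁻¹ * y else 0) :
    ∑ j, w j * p j * v j = a * w 0 * x + b * w (Fin.last n) * y := by
  have h0n : (0 : Fin (n+1)) ≠ Fin.last n := by
    simpa [Fin.ext_iff] using (show 0 ≠ n by omega)
  rw [← Finset.sum_subset (Finset.subset_univ {0, Fin.last n}), Finset.sum_pair h0n]
  · simp [hv, h0n.symm]
    field_simp
  · intro j _ hj
    simp only [Finset.mem_insert, Finset.mem_singleton, not_or] at hj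
    simp [hv, hj.1, hj.2]

theorem sbpSat_fluxPairing_nonpos {n : ℕ} (hn : 1 ≤ n)
    {p : Fin (n+1) → ℝ} (hp : ∀ j, 0 < p j)
    {Dp Dm : Matrix (Fin (n+1)) (Fin (n+1)) ℝ}
    (hSBP : ∀ f g : Fin (n+1) → ℝ,
      (∑ j, g j * p j * (Dp *ᵥ f) j) + (∑ j, f j * p j * (Dm *ᵥ g) j)
        = f (Fin.last n) * g (Fin.last n) - f 0 * g 0)
    {α₁ α₂ β₁ β₂ τ₁₁ τ₁₂ τ₂₁ τ₂₂ : ℝ} (hpen : StablePenalty α₁ α₂ β₁ β₂ τ₁₁ τ₁₂ τ₂₁ τ₂₂)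
    {F₁ F₂ S₁ S₂ : Fin (n+1) → ℝ}
    (hS₁ : ∀ j, S₁ j =
      if j = 0 then -τ₁₁ * (p 0)⁻¹ * (α₁ * F₁ 0 + α₂ * F₂ 0)
      else if j = Fin.last n then
        -τ₁₂ * (p (Fin.last n))⁻¹ * (β₁ * F₁ (Fin.last n) - β₂ * F₂ (Fin.last n))
      else 0)
    (hS₂ : ∀ j, S₂ j =
      if j = 0 then -τ₂₁ * (p 0)⁻¹ * (α₁ * F₁ 0 + α₂ * F₂ 0)
      else if j = Fin.last n then
        -τ₂₂ * (p (Fin.last n))⁻¹ * (β₁ * F₁ (Fin.last n) - β₂ * F₂ (Fin.last n))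
      else 0) :
    (∑ j, F₂ j * p j * (-(Dp *ᵥ F₁) + S₁) j) + (∑ j, F₁ j * p j * (-(Dm *ᵥ F₂) + S₂) j)
      ≤ 0 := by
  have hp₀ := (hp 0).ne'
  have hpₙ := (hp (Fin.last n)).ne'
  have hSAT₁ := sum_mul_mul_boundary_ite hn hp₀ hpₙ F₂ hS₁
  have hSAT₂ := sum_mul_mul_boundary_ite hn hp₀ hpₙ F₁ hS₂
  simp only [Pi.add_apply, Pi.neg_apply, mul_add, mul_neg, Finset.sum_add_distrib,
    Finset.sum_neg_distrib, hSAT₁, hSAT₂]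
  have hBT := hpen.boundaryTerm_nonpos (F₁ 0) (F₂ 0) (F₁ (Fin.last n)) (F₂ (Fin.last n))
  linear_combination hBT - hSBP F₁ F₂

def shallowWaterEnergy {ι : Type*} [Fintype ι] (p : ι → ℝ) (g : ℝ) (h u : ι → ℝ) : ℝ :=
  ∑ j, p j * (g * h j ^ 2 + h j * u j ^ 2)

theorem hasDerivAt_shallowWaterEnergy {ι : Type*} [Fintype ι] (p : ι → ℝ) (g : ℝ)
    {h u : ℝ → ι → ℝ} {h' u' : ι → ℝ} {t : ℝ}
    (hh : HasDerivAt h h' t) (hu : HasDerivAt u u' t) :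
    HasDerivAt (fun t => shallowWaterEnergy p g (h t) (u t))
      (2 * ((∑ j, (u t j ^ 2 / 2 + g * h t j) * p j * h' j)
        + ∑ j, (u t j * h t j) * p j * u' j)) t := by
  have hnode : ∀ j, HasDerivAt (fun t => p j * (g * h t j ^ 2 + h t j * u t j ^ 2))
      (p j * (g * (2 * h t j * h' j) + (h' j * u t j ^ 2 + h t j * (2 * u t j * u' j)))) t := by
    intro j
    have hj := hasDerivAt_pi.mp hh j
    have uj := hasDerivAt_pi.mp hu j
    have hj2 : HasDerivAt (fun t => h t j ^ 2) (2 * h t j * h' j) t := by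
      simpa using hj.fun_pow 2
    have uj2 : HasDerivAt (fun t => u t j ^ 2) (2 * u t j * u' j) t := by
      simpa using uj.fun_pow 2
    exact ((hj2.const_mul g).add (hj.mul uj2)).const_mul (p j)
  refine (HasDerivAt.fun_sum (u := Finset.univ) fun j _ => hnode j).congr_deriv ?_
  rw [mul_add, Finset.mul_sum, Finset.mul_sum, ← Finset.sum_add_distrib]
  exact Finset.sum_congr rfl fun j _ => by ring

theorem stmt13_general (n : ℕ) (hn : 1 ≤ n)
    (p : Fin (n+1) → ℝ) (hp : ∀ j, 0 < p j)
    (Dp Dm : Matrix (Fin (n+1)) (Fin (n+1)) ℝ)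
    (hSBP : ∀ f g : Fin (n+1) → ℝ,
      (∑ j, g j * p j * (Dp *ᵥ f) j) + (∑ j, f j * p j * (Dm *ᵥ g) j)
        = f (Fin.last n) * g (Fin.last n) - f 0 * g 0)
    (g : ℝ)
    (α₁ α₂ β₁ β₂ τ₁₁ τ₁₂ τ₂₁ τ₂₂ : ℝ)
    (hpen :
      (α₁ = 0 ∧ 0 < α₂ ∧ β₁ = 0 ∧ 0 < β₂ ∧
        0 ≤ τ₁₁ ∧ τ₂₁ = 1/α₂ ∧ τ₁₂ ≤ 0 ∧ τ₂₂ = 1/β₂) ∨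
      (0 < α₁ ∧ 0 ≤ α₂ ∧ 0 < β₁ ∧ 0 ≤ β₂ ∧
        τ₁₁ = 1/α₁ ∧ τ₂₁ = 0 ∧ τ₁₂ = -1/β₁ ∧ τ₂₂ = 0))
    (h u F₁ F₂ S₁ S₂ : ℝ → Fin (n+1) → ℝ)
    (hF₁ : ∀ t j, F₁ t j = u t j * h t j)
    (hF₂ : ∀ t j, F₂ t j = (u t j)^2 / 2 + g * h t j)
    (hS₁ : ∀ t j, S₁ t j =
      if j = 0 then -τ₁₁ * (p 0)⁻¹ * (α₁ * F₁ t 0 + α₂ * F₂ t 0)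
      else if j = Fin.last n then
        -τ₁₂ * (p (Fin.last n))⁻¹ * (β₁ * F₁ t (Fin.last n) - β₂ * F₂ t (Fin.last n))
      else 0)
    (hS₂ : ∀ t j, S₂ t j =
      if j = 0 then -τ₂₁ * (p 0)⁻¹ * (α₁ * F₁ t 0 + α₂ * F₂ t 0)
      else if j = Fin.last n then
        -τ₂₂ * (p (Fin.last n))⁻¹ * (β₁ * F₁ t (Fin.last n) - β₂ * F₂ t (Fin.last n))
      else 0)
    (hh : ∀ t, HasDerivAt h (-(Dp *ᵥ F₁ t) + S₁ t) t)
    (hu : ∀ t, HasDerivAt u (-(Dm *ᵥ F₂ t) + S₂ t) t) :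
    ∀ s t : ℝ, 0 ≤ s → s ≤ t →
      (∑ j, p j * (g * (h t j)^2 + (h t j)*(u t j)^2))
        ≤ ∑ j, p j * (g * (h s j)^2 + (h s j)*(u s j)^2) := by
  intro s t _ hst
  have hE := fun x => hasDerivAt_shallowWaterEnergy p g (hh x) (hu x)
  refine antitone_of_deriv_nonpos (fun x => (hE x).differentiableAt) (fun x => ?_) hst
  rw [(hE x).deriv]
  simp only [← hF₁, ← hF₂]
  linarith [sbpSat_fluxPairing_nonpos hn hp hSBP hpen (hS₁ x) (hS₂ x)]

/-- Strong (entropy) stability of the dual-pairing SBP-SAT semi-discrete approximation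
of the nonlinear vector-invariant shallow water equations: under the dual-pairing SBP
property and stable penalty parameters, the discrete energy/entropy
`E(t) = Σⱼ pⱼ (g hⱼ² + hⱼuⱼ²)` is nonincreasing. -/
theorem stmt13 (n : ℕ) (hn : 1 ≤ n)
    (p : Fin (n+1) → ℝ) (hp : ∀ j, 0 < p j)
    (Dp Dm : Matrix (Fin (n+1)) (Fin (n+1)) ℝ)
    (hSBP : ∀ f g : Fin (n+1) → ℝ,
      (∑ j, g j * p j * (Dp *ᵥ f) j) + (∑ j, f j * p j * (Dm *ᵥ g) j)
        = f (Fin.last n) * g (Fin.last n) - f 0 * g 0)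
    (g : ℝ) (hg : 0 < g)
    (α₁ α₂ β₁ β₂ τ₁₁ τ₁₂ τ₂₁ τ₂₂ : ℝ)
    (hpen :
      (α₁ = 0 ∧ 0 < α₂ ∧ β₁ = 0 ∧ 0 < β₂ ∧
        0 ≤ τ₁₁ ∧ τ₂₁ = 1/α₂ ∧ τ₁₂ ≤ 0 ∧ τ₂₂ = 1/β₂) ∨
      (0 < α₁ ∧ 0 ≤ α₂ ∧ 0 < β₁ ∧ 0 ≤ β₂ ∧
        τ₁₁ = 1/α₁ ∧ τ₂₁ = 0 ∧ τ₁₂ = -1/β₁ ∧ τ₂₂ = 0))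
    (h u F₁ F₂ S₁ S₂ : ℝ → Fin (n+1) → ℝ)
    (hF₁ : ∀ t j, F₁ t j = u t j * h t j)
    (hF₂ : ∀ t j, F₂ t j = (u t j)^2 / 2 + g * h t j)
    (hS₁ : ∀ t j, S₁ t j =
      if j = 0 then -τ₁₁ * (p 0)⁻¹ * (α₁ * F₁ t 0 + α₂ * F₂ t 0)
      else if j = Fin.last n then
        -τ₁₂ * (p (Fin.last n))⁻¹ * (β₁ * F₁ t (Fin.last n) - β₂ * F₂ t (Fin.last n))
      else 0)
    (hS₂ : ∀ t j, S₂ t j =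
      if j = 0 then -τ₂₁ * (p 0)⁻¹ * (α₁ * F₁ t 0 + α₂ * F₂ t 0)
      else if j = Fin.last n then
        -τ₂₂ * (p (Fin.last n))⁻¹ * (β₁ * F₁ t (Fin.last n) - β₂ * F₂ t (Fin.last n))
      else 0)
    (hh : ∀ t, HasDerivAt h (-(Dp *ᵥ F₁ t) + S₁ t) t)
    (hu : ∀ t, HasDerivAt u (-(Dm *ᵥ F₂ t) + S₂ t) t) :
    ∀ s t : ℝ, 0 ≤ s → s ≤ t →
      (∑ j, p j * (g * (h t j)^2 + (h t j)*(u t j)^2))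
        ≤ ∑ j, p j * (g * (h s j)^2 + (h s j)*(u s j)^2) :=
  stmt13_general n hn p hp Dp Dm hSBP g α₁ α₂ β₁ β₂ τ₁₁ τ₁₂ τ₂₁ τ₂₂ hpen h u F₁ F₂ S₁ S₂ hF₁ hF₂ hS₁
    hS₂ hh hu
end

section
/- Let ι be a finite index type, let Dpx, Dpy, Dmx, Dmy be ι×ι real matrices with Dmx = −Dpxᵀ and Dmy = −Dpyᵀ, let g ∈ ℝ and f : ι → ℝ. Let h, u, v : ℝ → (ι → ℝ) be differentiable and, writing ∘ for the entrywise product of vectors, K(t) = (u(t)∘u(t) + v(t)∘v(t))/2 + g·h(t) and ω(t) = Dmx(v(t)) − Dmy(u(t)) + f, suppose that for all t: h'(t) = −Dpx(u(t)∘h(t)) − Dpy(v(t)∘h(t)), u'(t) = ω(t)∘v(t) − Dmx(K(t)), and v'(t) = −ω(t)∘u(t) − Dmy(K(t)). Then the total discrete energy E(t) = Σⱼ ( g·h(t)ⱼ² + h(t)ⱼ·u(t)ⱼ² + h(t)ⱼ·v(t)ⱼ² ) is constant in t. -/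
/-!
Differentiating, `dE/dt = 2 (K·h' + (h u)·u' + (h v)·v')` with `K` the Bernoulli function.
Inserting the equations, the vorticity terms `(h u)·(ω v) − (h v)·(ω u)` cancel pointwise, and
the pressure terms cancel by summation by parts: `K·(Dpx a) + a·(Dmx K) = 0` for every `K`
since `Dmx = −Dpxᵀ` (with `a = u h`; likewise in `y`).
-/

open Matrix Finset

section Energy

variable {ι : Type*} [Fintype ι]

noncomputable def totalEnergy (g : ℝ) (h u v : ι → ℝ) : ℝ :=
  ∑ j, (g * h j ^ 2 + h j * u j ^ 2 + h j * v j ^ 2)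

noncomputable def bernoulliPotential (g : ℝ) (h u v : ι → ℝ) : ι → ℝ :=
  (u * u + v * v) / 2 + g • h

theorem hasDerivAt_energyDensity {φ ψ χ : ℝ → ℝ} {φ' ψ' χ' : ℝ} (g : ℝ) {t : ℝ}
    (hφ : HasDerivAt φ φ' t) (hψ : HasDerivAt ψ ψ' t) (hχ : HasDerivAt χ χ' t) :
    HasDerivAt (fun s => g * φ s ^ 2 + φ s * ψ s ^ 2 + φ s * χ s ^ 2)
      (2 * (((ψ t * ψ t + χ t * χ t) / 2 + g * φ t) * φ'
        + φ t * ψ t * ψ' + φ t * χ t * χ')) t := by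
  refine (((hφ.fun_pow 2).const_mul g).fun_add (hφ.fun_mul (hψ.fun_pow 2))).fun_add
    (hφ.fun_mul (hχ.fun_pow 2)) |>.congr_deriv ?_
  ring

theorem hasDerivAt_totalEnergy {h u v : ℝ → ι → ℝ} {h' u' v' : ι → ℝ} (g : ℝ) {t : ℝ}
    (hh : HasDerivAt h h' t) (hu : HasDerivAt u u' t) (hv : HasDerivAt v v' t) :
    HasDerivAt (fun s => totalEnergy g (h s) (u s) (v s))
      (2 * (bernoulliPotential g (h t) (u t) (v t) ⬝ᵥ h'
        + (h t * u t) ⬝ᵥ u' + (h t * v t) ⬝ᵥ v')) t := by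
  have hsum := HasDerivAt.fun_sum fun j (_ : j ∈ univ) => hasDerivAt_energyDensity g
    (hasDerivAt_pi.1 hh j) (hasDerivAt_pi.1 hu j) (hasDerivAt_pi.1 hv j)
  refine hsum.congr_deriv ?_
  simp only [bernoulliPotential, dotProduct, ← sum_add_distrib, mul_sum, Pi.add_apply,
    Pi.mul_apply, Pi.div_apply, Pi.smul_apply, Pi.ofNat_apply, smul_eq_mul]

end Energy

theorem dotProduct_shallowWater_eq_zero {ι R : Type*} [Fintype ι] [CommRing R]
    {Dpx Dpy Dmx Dmy : Matrix ι ι R} (hmx : Dmx = -Dpxᵀ) (hmy : Dmy = -Dpyᵀ)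
    (K ω h u v : ι → R) :
    K ⬝ᵥ (-(Dpx *ᵥ (u * h)) - Dpy *ᵥ (v * h)) + (h * u) ⬝ᵥ (ω * v - Dmx *ᵥ K)
      + (h * v) ⬝ᵥ (-(ω * u) - Dmy *ᵥ K) = 0 := by
  have vorticity : (h * u) ⬝ᵥ (ω * v) = (h * v) ⬝ᵥ (ω * u) :=
    sum_congr rfl fun j _ => by simp only [Pi.mul_apply]; ring
  subst hmx hmy
  simp only [dotProduct_sub, dotProduct_neg, neg_mulVec, dotProduct_transpose_mulVec,
    vorticity, mul_comm u h, mul_comm v h]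
  ring

theorem stmt15_general {ι : Type*} [Fintype ι]
    (Dpx Dpy Dmx Dmy : Matrix ι ι ℝ)
    (hmx : Dmx = -Dpxᵀ) (hmy : Dmy = -Dpyᵀ)
    (g : ℝ)
    (h u v : ℝ → ι → ℝ) (K ω : ℝ → ι → ℝ)
    (hK : ∀ t, K t = (u t * u t + v t * v t) / 2 + g • h t)
    (hh : ∀ t, HasDerivAt h (-(Dpx *ᵥ (u t * h t)) - Dpy *ᵥ (v t * h t)) t)
    (hu : ∀ t, HasDerivAt u (ω t * v t - Dmx *ᵥ K t) t)
    (hv : ∀ t, HasDerivAt v (-(ω t * u t) - Dmy *ᵥ K t) t) :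
    ∀ t₁ t₂ : ℝ,
      (∑ j, (g * (h t₁ j)^2 + h t₁ j * (u t₁ j)^2 + h t₁ j * (v t₁ j)^2))
        = ∑ j, (g * (h t₂ j)^2 + h t₂ j * (u t₂ j)^2 + h t₂ j * (v t₂ j)^2) := by
  have hE : ∀ t, HasDerivAt (fun s => totalEnergy g (h s) (u s) (v s)) 0 t := fun t => by
    simpa only [bernoulliPotential, ← hK t, dotProduct_shallowWater_eq_zero hmx hmy, mul_zero]
      using hasDerivAt_totalEnergy g (hh t) (hu t) (hv t)
  exact is_const_of_deriv_eq_zero (fun t => (hE t).differentiableAt) fun t => (hE t).deriv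

/-- Exact semi-discrete energy conservation for the dual-pairing SBP approximation of
the 2D rotating vector-invariant shallow water equations on a doubly periodic grid:
with `Dmx = −Dpxᵀ`, `Dmy = −Dpyᵀ`, Bernoulli function `K = (u∘u + v∘v)/2 + g h` and
absolute vorticity `ω = Dmx v − Dmy u + f`, the total energy
`E(t) = Σⱼ (g hⱼ² + hⱼuⱼ² + hⱼvⱼ²)` is constant in time. -/
theorem stmt15 {ι : Type*} [Fintype ι] [DecidableEq ι]
    (Dpx Dpy Dmx Dmy : Matrix ι ι ℝ)
    (hmx : Dmx = -Dpxᵀ) (hmy : Dmy = -Dpyᵀ)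
    (g : ℝ) (f : ι → ℝ)
    (h u v : ℝ → ι → ℝ) (K ω : ℝ → ι → ℝ)
    (hK : ∀ t, K t = (u t * u t + v t * v t) / 2 + g • h t)
    (hω : ∀ t, ω t = Dmx *ᵥ v t - Dmy *ᵥ u t + f)
    (hh : ∀ t, HasDerivAt h (-(Dpx *ᵥ (u t * h t)) - Dpy *ᵥ (v t * h t)) t)
    (hu : ∀ t, HasDerivAt u (ω t * v t - Dmx *ᵥ K t) t)
    (hv : ∀ t, HasDerivAt v (-(ω t * u t) - Dmy *ᵥ K t) t) :
    ∀ t₁ t₂ : ℝ,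
      (∑ j, (g * (h t₁ j)^2 + h t₁ j * (u t₁ j)^2 + h t₁ j * (v t₁ j)^2))
        = ∑ j, (g * (h t₂ j)^2 + h t₂ j * (u t₂ j)^2 + h t₂ j * (v t₂ j)^2) :=
  stmt15_general Dpx Dpy Dmx Dmy hmx hmy g h u v K ω hK hh hu hv
end

section
/- Let g, h, u be real numbers with g > 0, h > 0 and u < √(gh), and set c = √(gh). Then the nonlinear transmissive boundary expression at x = 0 satisfies the factorization u·h + √(h/g)·((c − u/2)/(c − u))·(u²/2 + g·h) = h·(u + 2c)·(2c² − u²)/(4c(c − u)). In particular, if u + 2√(gh) = 0 then u·h + √(h/g)·((√(gh) − u/2)/(√(gh) − u))·(u²/2 + g·h) = 0, i.e. the nonlinear transmissive boundary condition F₁ + α₂F₂ = 0 holds whenever the incoming nonlinear Riemann invariant u + 2√(gh) vanishes. -/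
theorem Real.sqrt_div_eq_div_sqrt_mul {g h : ℝ} (hh : 0 ≤ h) :
    Real.sqrt (h / g) = h / Real.sqrt (g * h) := by
  have h_div : h / g = h ^ 2 / (g * h) := by
    rcases eq_or_ne h 0 with rfl | h0
    · simp
    · rw [sq, mul_div_mul_right _ _ h0]
  rw [h_div, Real.sqrt_div (sq_nonneg h), Real.sqrt_sq hh]

theorem transmissive_boundary_factor {K : Type*} [Field K] [CharZero K] {h c u : K}
    (hc : c ≠ 0) (hcu : c - u ≠ 0) :
    u * h + h / c * ((c - u / 2) / (c - u)) * (u ^ 2 / 2 + c ^ 2)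
      = h * (u + 2 * c) * (2 * c ^ 2 - u ^ 2) / (4 * c * (c - u)) := by
  field_simp
  ring

/-- Factorization of the nonlinear transmissive boundary expression at `x = 0`:
with `c = √(gh)`, `F₁ = uh`, `F₂ = u²/2 + gh` and
`α₂ = √(h/g)(c − u/2)/(c − u)`, one has
`F₁ + α₂ F₂ = h (u + 2c)(2c² − u²)/(4c(c − u))`; in particular the transmissive
boundary condition `F₁ + α₂ F₂ = 0` holds whenever the incoming nonlinear Riemann
invariant `u + 2√(gh)` vanishes. -/
theorem stmt18 (g h u : ℝ) (hg : 0 < g) (hh : 0 < h)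
    (hu : u < Real.sqrt (g*h)) (c : ℝ) (hc : c = Real.sqrt (g*h)) :
    (u*h + Real.sqrt (h/g) * ((c - u/2)/(c - u)) * (u^2/2 + g*h)
        = h * (u + 2*c) * (2*c^2 - u^2) / (4*c*(c - u))) ∧
    (u + 2*Real.sqrt (g*h) = 0 →
      u*h + Real.sqrt (h/g) * ((Real.sqrt (g*h) - u/2)/(Real.sqrt (g*h) - u))
        * (u^2/2 + g*h) = 0) := by
  have hgh : 0 < g * h := mul_pos hg hh
  have hsq : g * h = c ^ 2 := by rw [hc, Real.sq_sqrt hgh.le]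
  have hrt : Real.sqrt (h / g) = h / c := hc ▸ Real.sqrt_div_eq_div_sqrt_mul hh.le
  have factor : u*h + Real.sqrt (h/g) * ((c - u/2)/(c - u)) * (u^2/2 + g*h)
      = h * (u + 2*c) * (2*c^2 - u^2) / (4*c*(c - u)) := by
    rw [hrt, hsq]
    have hc0 : c ≠ 0 := hc ▸ (Real.sqrt_pos.mpr hgh).ne'
    exact transmissive_boundary_factor hc0 (sub_ne_zero.mpr (hc ▸ hu).ne')
  refine ⟨factor, fun hinv => ?_⟩
  subst hc
  rw [factor, hinv, mul_zero, zero_mul, zero_div]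
end
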